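/- Let U, V : W → W be measurable maps on a probability space (W, μ) such that U ∘ V = id μ-almost surely and Vμ is equivalent to μ. Then V ∘ U = id μ-almost surely. -/
import Mathlib

open MeasureTheory

/-- If `U ∘ V = id` μ-a.s. and the pushforward `V★μ` is equivalent to `μ`
(mutually absolutely continuous), then `V ∘ U = id` μ-a.s., i.e. the right inverse `V`
is also a left inverse. -/
theorem right_inverse_is_left_inverse {W : Type*} [MeasurableSpace W] [StandardBorelSpace W]
    (μ : Measure W) [IsProbabilityMeasure μ]
    (U V : W → W) (hU : Measurable U) (hV : Measurable V)
    (hUV : ∀ᵐ w ∂μ, U (V w) = w)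
    (hac : μ.map V ≪ μ) (hac' : μ ≪ μ.map V) :
    ∀ᵐ w ∂μ, V (U w) = w := by
  letI := upgradeStandardBorel W
  have hs : MeasurableSet {x : W | V (U x) = x} :=
    MeasureTheory.StronglyMeasurable.measurableSet_eq_fun
      (hV.comp hU).stronglyMeasurable measurable_id.stronglyMeasurable
  have h2 : ∀ᵐ x ∂ μ.map V, V (U x) = x := by
    rw [ae_map_iff hV.aemeasurable hs]
    filter_upwards [hUV] with w hw
    simp only [Set.mem_setOf_eq, hw]
  exact hac'.ae_le h2
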